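/- arXiv:1901.09506 — 4 statements merged into one kernel-verified Lean document; each statement's English description precedes it below -/
import Mathlib

section
/- Let f be convex and subdifferentiable, h be μ_h-strongly convex and subdifferentiable with subgradients bounded in dual norm by C_H, on a nonempty compact convex set X. For λ_{k-1}, λ_k > 0, let x*_{λ_{k-1}} and x*_{λ_k} be the unique minimizers over X of f + λ_{k-1}h and f + λ_k h respectively. Then ‖x*_{λ_k} - x*_{λ_{k-1}}‖ ≤ (C_H/μ_h)|1 - λ_{k-1}/λ_k|. -/
set_option maxHeartbeats 1000000

open RealInnerProductSpace

/-- Strong convexity at a minimizer, via segment argument. -/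
lemma key_min {n : ℕ} (X : Set (EuclideanSpace ℝ (Fin n)))
    (f h : EuclideanSpace ℝ (Fin n) → ℝ)
    (gf gh : EuclideanSpace ℝ (Fin n) → EuclideanSpace ℝ (Fin n))
    (μh lam : ℝ) (hμ : 0 < μh) (hlam : 0 < lam)
    (hXconv : Convex ℝ X)
    (hfsub : ∀ x ∈ X, ∀ y ∈ X, f x + ⟪gf x, y - x⟫ ≤ f y)
    (hhsub : ∀ x ∈ X, ∀ y ∈ X,
      h x + ⟪gh x, y - x⟫ + μh / 2 * ‖x - y‖ ^ 2 ≤ h y)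
    (x y : EuclideanSpace ℝ (Fin n)) (hxX : x ∈ X) (hyX : y ∈ X)
    (hmin : ∀ z ∈ X, f x + lam * h x ≤ f z + lam * h z) :
    f x + lam * h x + lam * μh / 2 * ‖y - x‖ ^ 2 ≤ f y + lam * h y := by
  set N : ℝ := ‖y - x‖ with hN
  have hN0 : 0 ≤ N := norm_nonneg _
  set a : ℝ := lam * μh / 2 * N ^ 2 with ha
  have ha0 : 0 ≤ a := by positivity
  refine le_of_forall_pos_le_add ?_
  intro ε hε
  set t : ℝ := min (1/2) (ε / (a + 1)) with htdef
  have ht0 : 0 < t := lt_min (by norm_num) (by positivity)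
  have ht1 : t < 1 := lt_of_le_of_lt (min_le_left _ _) (by norm_num)
  have hta : t * a ≤ ε := by
    have h1 : t ≤ ε / (a + 1) := min_le_right _ _
    have h2 : t * a ≤ (ε / (a + 1)) * a := mul_le_mul_of_nonneg_right h1 ha0
    have h3 : (ε / (a + 1)) * a ≤ ε := by
      rw [div_mul_eq_mul_div, div_le_iff₀ (by linarith)]
      nlinarith
    linarith
  set z : EuclideanSpace ℝ (Fin n) := x + t • (y - x) with hz
  have hzX : z ∈ X := by
    have := hXconv hxX hyX (by linarith : (0:ℝ) ≤ 1 - t) ht0.le (by ring)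
    convert this using 1
    rw [hz]; module
  have hzx : x - z = (-t) • (y - x) := by rw [hz]; module
  have hzy : y - z = (1 - t) • (y - x) := by rw [hz]; module
  have hnzx : ‖z - x‖ = t * N := by
    rw [← norm_neg, neg_sub, hzx, norm_smul, hN]
    simp [abs_of_pos ht0]
  have hnzy : ‖z - y‖ = (1 - t) * N := by
    rw [← norm_neg, neg_sub, hzy, norm_smul, hN]
    simp [abs_of_pos (by linarith : (0:ℝ) < 1 - t)]
  have hih : ⟪gh z, x - z⟫ = (-t) * ⟪gh z, y - x⟫ := by
    rw [hzx, real_inner_smul_right]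
  have hih' : ⟪gh z, y - z⟫ = (1 - t) * ⟪gh z, y - x⟫ := by
    rw [hzy, real_inner_smul_right]
  have hif : ⟪gf z, x - z⟫ = (-t) * ⟪gf z, y - x⟫ := by
    rw [hzx, real_inner_smul_right]
  have hif' : ⟪gf z, y - z⟫ = (1 - t) * ⟪gf z, y - x⟫ := by
    rw [hzy, real_inner_smul_right]
  have h1 := hhsub z hzX x hxX
  have h2 := hhsub z hzX y hyX
  have f1 := hfsub z hzX x hxX
  have f2 := hfsub z hzX y hyX
  rw [hih, hnzx] at h1
  rw [hih', hnzy] at h2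
  rw [hif] at f1
  rw [hif'] at f2
  have opt := hmin z hzX
  set c : ℝ := ⟪gh z, y - x⟫
  set cf : ℝ := ⟪gf z, y - x⟫
  have hseg : h z + μh / 2 * N ^ 2 * (t * (1 - t)) ≤ (1 - t) * h x + t * h y := by
    nlinarith [mul_le_mul_of_nonneg_left h1 (by linarith : (0:ℝ) ≤ 1 - t),
      mul_le_mul_of_nonneg_left h2 ht0.le, sq_nonneg N, sq_nonneg t]
  have fseg : f z ≤ (1 - t) * f x + t * f y := by
    nlinarith [mul_le_mul_of_nonneg_left f1 (by linarith : (0:ℝ) ≤ 1 - t),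
      mul_le_mul_of_nonneg_left f2 ht0.le]
  have hlseg := mul_le_mul_of_nonneg_left hseg hlam.le
  have hT : t * (f x + lam * h x + lam * μh / 2 * N ^ 2 * (1 - t)) ≤
      t * (f y + lam * h y) := by nlinarith [hlseg, fseg, opt]
  have hT' : f x + lam * h x + lam * μh / 2 * N ^ 2 * (1 - t) ≤
      f y + lam * h y := le_of_mul_le_mul_left hT ht0
  have hE : lam * μh / 2 * N ^ 2 * (1 - t) = a - t * a := by rw [ha]; ring
  linarith

/-- Bound on the distance between minimizers of two regularized problems:
‖x*_{λ_k} - x*_{λ_{k-1}}‖ ≤ (C_H/μ_h)|1 - λ_{k-1}/λ_k|. -/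
theorem regularized_solutions_distance {n : ℕ} (X : Set (EuclideanSpace ℝ (Fin n)))
    (f h : EuclideanSpace ℝ (Fin n) → ℝ)
    (gf gh : EuclideanSpace ℝ (Fin n) → EuclideanSpace ℝ (Fin n))
    (μh CH lam₁ lam₂ : ℝ) (hμ : 0 < μh) (hCH : 0 < CH)
    (hlam₁ : 0 < lam₁) (hlam₂ : 0 < lam₂)
    (hXne : X.Nonempty) (hXcomp : IsCompact X) (hXconv : Convex ℝ X)
    (hfsub : ∀ x ∈ X, ∀ y ∈ X, f x + ⟪gf x, y - x⟫ ≤ f y)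
    (hhsub : ∀ x ∈ X, ∀ y ∈ X,
      h x + ⟪gh x, y - x⟫ + μh / 2 * ‖x - y‖ ^ 2 ≤ h y)
    (hghbd : ∀ x ∈ X, ‖gh x‖ ≤ CH)
    (x₁ x₂ : EuclideanSpace ℝ (Fin n))
    (hx₁ : x₁ ∈ X ∧ ∀ y ∈ X, f x₁ + lam₁ * h x₁ ≤ f y + lam₁ * h y)
    (hx₂ : x₂ ∈ X ∧ ∀ y ∈ X, f x₂ + lam₂ * h x₂ ≤ f y + lam₂ * h y) :
    ‖x₂ - x₁‖ ≤ CH / μh * |1 - lam₁ / lam₂| := by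
  obtain ⟨hx₁X, hx₁min⟩ := hx₁
  obtain ⟨hx₂X, hx₂min⟩ := hx₂
  set D : ℝ := ‖x₂ - x₁‖ with hD
  have hD0 : 0 ≤ D := norm_nonneg _
  have hDrev : ‖x₁ - x₂‖ = D := by rw [hD, norm_sub_rev]
  have K1 : f x₁ + lam₁ * h x₁ + lam₁ * μh / 2 * D ^ 2 ≤ f x₂ + lam₁ * h x₂ := by
    have := key_min X f h gf gh μh lam₁ hμ hlam₁ hXconv hfsub hhsub x₁ x₂ hx₁X hx₂X hx₁min
    rwa [← hD] at this
  have K2 : f x₂ + lam₂ * h x₂ + lam₂ * μh / 2 * D ^ 2 ≤ f x₁ + lam₂ * h x₁ := by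
    have := key_min X f h gf gh μh lam₂ hμ hlam₂ hXconv hfsub hhsub x₂ x₁ hx₂X hx₁X hx₂min
    rwa [hDrev] at this
  have cb1 : -(CH * D) ≤ ⟪gh x₁, x₂ - x₁⟫ := by
    have hb : |⟪gh x₁, x₂ - x₁⟫| ≤ CH * D := by
      refine le_trans (abs_real_inner_le_norm _ _) ?_
      exact mul_le_mul_of_nonneg_right (hghbd x₁ hx₁X) hD0
    linarith [neg_abs_le ⟪gh x₁, x₂ - x₁⟫]
  have cb2 : -(CH * D) ≤ ⟪gh x₂, x₁ - x₂⟫ := by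
    have hb : |⟪gh x₂, x₁ - x₂⟫| ≤ CH * D := by
      refine le_trans (abs_real_inner_le_norm _ _) ?_
      rw [hDrev]
      exact mul_le_mul_of_nonneg_right (hghbd x₂ hx₂X) hD0
    linarith [neg_abs_le ⟪gh x₂, x₁ - x₂⟫]
  have h3 := hhsub x₁ hx₁X x₂ hx₂X
  have h4 := hhsub x₂ hx₂X x₁ hx₁X
  rw [hDrev] at h3
  rw [show ‖x₂ - x₁‖ = D from rfl] at h4
  have hb1 : h x₁ - h x₂ ≤ CH * D - μh / 2 * D ^ 2 := by linarith
  have hb2 : h x₂ - h x₁ ≤ CH * D - μh / 2 * D ^ 2 := by linarith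
  have habs : |1 - lam₁ / lam₂| = |lam₂ - lam₁| / lam₂ := by
    have hE : 1 - lam₁ / lam₂ = (lam₂ - lam₁) / lam₂ := by field_simp
    rw [hE, abs_div, abs_of_pos hlam₂]
  rcases le_or_gt lam₁ lam₂ with hc | hc
  · have hkey : lam₂ * μh * D ^ 2 ≤ (lam₂ - lam₁) * CH * D := by
      nlinarith [mul_le_mul_of_nonneg_left hb1 (by linarith : (0:ℝ) ≤ lam₂ - lam₁)]
    have hgoal : D ≤ CH * (lam₂ - lam₁) / (μh * lam₂) := by
      rw [le_div_iff₀ (by positivity)]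
      rcases eq_or_lt_of_le hD0 with h0 | h0
      · have : D = 0 := h0.symm
        rw [this]
        nlinarith [mul_nonneg hCH.le (by linarith : (0:ℝ) ≤ lam₂ - lam₁)]
      · have h2 : (D * (μh * lam₂)) * D ≤ (CH * (lam₂ - lam₁)) * D := by nlinarith [hkey]
        exact le_of_mul_le_mul_right h2 h0
    rw [habs, abs_of_nonneg (by linarith : (0:ℝ) ≤ lam₂ - lam₁)]
    calc D ≤ CH * (lam₂ - lam₁) / (μh * lam₂) := hgoal
    _ = CH / μh * ((lam₂ - lam₁) / lam₂) := (div_mul_div_comm CH μh (lam₂ - lam₁) lam₂).symm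
  · have hkey : lam₁ * μh * D ^ 2 ≤ (lam₁ - lam₂) * CH * D := by
      nlinarith [mul_le_mul_of_nonneg_left hb2 (by linarith : (0:ℝ) ≤ lam₁ - lam₂)]
    have hgoal : D ≤ CH * (lam₁ - lam₂) / (μh * lam₂) := by
      rw [le_div_iff₀ (by positivity)]
      rcases eq_or_lt_of_le hD0 with h0 | h0
      · have : D = 0 := h0.symm
        rw [this]
        nlinarith [mul_nonneg hCH.le (by linarith : (0:ℝ) ≤ lam₁ - lam₂)]
      · have hmono : (D * (μh * lam₂)) * D ≤ (D * (μh * lam₁)) * D := by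
          nlinarith [mul_nonneg (mul_nonneg hD0 hD0) hμ.le, hc.le]
        have h2 : (D * (μh * lam₁)) * D ≤ (CH * (lam₁ - lam₂)) * D := by nlinarith [hkey]
        exact le_of_mul_le_mul_right (le_trans hmono h2) h0
    rw [habs, abs_of_nonpos (by linarith : lam₂ - lam₁ ≤ 0), neg_sub]
    calc D ≤ CH * (lam₁ - lam₂) / (μh * lam₂) := hgoal
    _ = CH / μh * ((lam₁ - lam₂) / lam₂) := (div_mul_div_comm CH μh (lam₁ - lam₂) lam₂).symm
end

section
/- Let f be convex and continuous, h be strongly convex and continuous, on a nonempty compact convex set X. Let {λ_k} be a positive sequence with λ_k → 0, and let x*_{λ_k} be the unique minimizer of f + λ_k h over X. Then the sequence {x*_{λ_k}} converges to the unique minimizer x*_h of h over the set X* of minimizers of f on X. -/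
open Filter Topology

/-- As λ_k → 0, the minimizers x*_{λ_k} of f + λ_k h over X converge to the unique
minimizer of h over the set of minimizers of f on X. -/
theorem regularization_path_converges {n : ℕ} (X : Set (EuclideanSpace ℝ (Fin n)))
    (f hfn : EuclideanSpace ℝ (Fin n) → ℝ) (μh : ℝ) (hμ : 0 < μh)
    (hXne : X.Nonempty) (hXcomp : IsCompact X) (hXconv : Convex ℝ X)
    (hf : ConvexOn ℝ X f) (hfc : ContinuousOn f X)
    (hh : StrongConvexOn X μh hfn) (hhc : ContinuousOn hfn X)
    (lam : ℕ → ℝ) (hlampos : ∀ k, 0 < lam k)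
    (hlam0 : Tendsto lam atTop (𝓝 0))
    (xk : ℕ → EuclideanSpace ℝ (Fin n))
    (hxk : ∀ k, xk k ∈ X ∧
      ∀ z ∈ X, f (xk k) + lam k * hfn (xk k) ≤ f z + lam k * hfn z)
    (xh : EuclideanSpace ℝ (Fin n))
    (hxh : (xh ∈ X ∧ ∀ z ∈ X, f xh ≤ f z) ∧
      ∀ z, (z ∈ X ∧ ∀ w ∈ X, f z ≤ f w) → hfn xh ≤ hfn z) :
    Tendsto xk atTop (𝓝 xh) := by
  obtain ⟨⟨hxhX, hxhmin⟩, hxhh⟩ := hxh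
  apply Filter.tendsto_of_subseq_tendsto
  intro ns hns
  obtain ⟨a, haX, φ, hφ, hconv⟩ :=
    hXcomp.tendsto_subseq (x := fun i => xk (ns i)) (fun i => (hxk (ns i)).1)
  refine ⟨φ, ?_⟩
  suffices ha : a = xh by rw [← ha]; exact hconv
  set y : ℕ → EuclideanSpace ℝ (Fin n) := fun i => xk (ns (φ i)) with hy
  set μ : ℕ → ℝ := fun i => lam (ns (φ i)) with hμdef
  have hyX : ∀ i, y i ∈ X := fun i => (hxk (ns (φ i))).1
  have hμ0 : Tendsto μ atTop (𝓝 0) := hlam0.comp (hns.comp hφ.tendsto_atTop)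
  have htends : Tendsto y atTop (𝓝[X] a) :=
    tendsto_nhdsWithin_of_tendsto_nhds_of_eventually_within _ hconv
      (Eventually.of_forall hyX)
  have hfy : Tendsto (fun i => f (y i)) atTop (𝓝 (f a)) := ((hfc a haX).tendsto).comp htends
  have hhy : Tendsto (fun i => hfn (y i)) atTop (𝓝 (hfn a)) := ((hhc a haX).tendsto).comp htends
  have hfa : ∀ z ∈ X, f a ≤ f z := by
    intro z hz
    have hle : ∀ i, f (y i) + μ i * hfn (y i) ≤ f z + μ i * hfn z :=
      fun i => (hxk (ns (φ i))).2 z hz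
    have h1 : Tendsto (fun i => f (y i) + μ i * hfn (y i)) atTop (𝓝 (f a + 0 * hfn a)) :=
      hfy.add (hμ0.mul hhy)
    have h2 : Tendsto (fun i => f z + μ i * hfn z) atTop (𝓝 (f z + 0 * hfn z)) :=
      tendsto_const_nhds.add (hμ0.mul tendsto_const_nhds)
    have := le_of_tendsto_of_tendsto' h1 h2 hle
    simpa using this
  have hhy_le : ∀ i, hfn (y i) ≤ hfn xh := by
    intro i
    have h1 : f (y i) + μ i * hfn (y i) ≤ f xh + μ i * hfn xh := (hxk _).2 xh hxhX
    have h2 : f xh ≤ f (y i) := hxhmin _ (hyX i)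
    have hpos : 0 < μ i := hlampos (ns (φ i))
    nlinarith
  have hha : hfn a ≤ hfn xh := le_of_tendsto hhy (Eventually.of_forall hhy_le)
  have hha2 : hfn xh ≤ hfn a := hxhh a ⟨haX, hfa⟩
  have heq : hfn a = hfn xh := le_antisymm hha hha2
  have hfeq : f a = f xh := le_antisymm (hfa xh hxhX) (hxhmin a haX)
  by_contra hne
  set m := (1/2 : ℝ) • a + (1/2 : ℝ) • xh with hm
  have hmX : m ∈ X := hXconv haX hxhX (by norm_num) (by norm_num) (by norm_num)
  have hnorm : 0 < ‖a - xh‖ := by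
    rw [norm_pos_iff, sub_ne_zero]; exact hne
  have hsc := hh.2 haX hxhX (by norm_num : (0:ℝ) ≤ 1/2) (by norm_num : (0:ℝ) ≤ 1/2)
    (by norm_num : (1/2 : ℝ) + 1/2 = 1)
  have hfm : ∀ w ∈ X, f m ≤ f w := by
    intro w hw
    have hc := hf.2 haX hxhX (by norm_num : (0:ℝ) ≤ 1/2) (by norm_num : (0:ℝ) ≤ 1/2)
      (by norm_num : (1/2 : ℝ) + 1/2 = 1)
    calc f m ≤ 1/2 * f a + 1/2 * f xh := hc
      _ = f xh := by rw [hfeq]; ring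
      _ ≤ f w := hxhmin w hw
  have hmmin : hfn xh ≤ hfn m := hxhh m ⟨hmX, hfm⟩
  simp only [smul_eq_mul] at hsc
  rw [← hm] at hsc
  nlinarith [mul_pos hμ (pow_pos hnorm 2), hsc, hmmin]
end

section
/- (Robbins–Siegmund-type deterministic lemma) Let {ν_k} be a sequence of nonnegative reals and {α_k}, {β_k} scalar sequences satisfying ν_{k+1} ≤ (1-α_k)ν_k + β_k for all k ≥ 0, with 0 ≤ α_k ≤ 1, β_k ≥ 0, ∑_{k=0}^∞ α_k = ∞, ∑_{k=0}^∞ β_k < ∞, and lim_{k→∞} β_k/α_k = 0. Then ν_k → 0. -/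
/-!
Writing the recursion as `ν (k+1) ≤ ν k - α k * ν k + β k`, the quantity
`ν n + ∑_{k<n} α k * ν k - ∑_{k<n} β k` is nonincreasing and bounded below, because the partial
sums of `β` converge. Hence `ν` converges to some `L ≥ 0` and `∑ α k * ν k < ∞`. If `L > 0`, then
eventually `α k ≤ (2 / L) * α k * ν k`, which would make `∑ α k` finite.
-/

open Filter Topology Finset

theorem exists_tendsto_and_summable_of_succ_le_sub_add {x d b : ℕ → ℝ} (hx : ∀ n, 0 ≤ x n)
    (hd : ∀ n, 0 ≤ d n) (hb : Summable b) (hrec : ∀ n, x (n + 1) ≤ x n - d n + b n) :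
    (∃ L, Tendsto x atTop (𝓝 L)) ∧ Summable d := by
  set v : ℕ → ℝ := fun n => x n + ∑ k ∈ range n, d k - ∑ k ∈ range n, b k
  have hv_anti : Antitone v := antitone_nat_of_succ_le fun n => by
    simp only [v, sum_range_succ]
    linarith [hrec n]
  obtain ⟨B, hB⟩ := hb.hasSum.tendsto_sum_nat.bddAbove_range
  have hb_le : ∀ n, ∑ k ∈ range n, b k ≤ B := fun n => hB ⟨n, rfl⟩
  have hd_sum : Summable d := summable_of_sum_range_le (c := x 0 + B) hd fun n => by
    have hvn : v n ≤ v 0 := hv_anti n.zero_le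
    simp only [v, range_zero, sum_empty] at hvn
    linarith [hx n, hb_le n]
  have hv_bdd : BddBelow (Set.range v) := ⟨-B, by
    rintro _ ⟨n, rfl⟩
    linarith [hx n, hb_le n, sum_nonneg fun k (_ : k ∈ range n) => hd k]⟩
  have hv_lim := tendsto_atTop_ciInf hv_anti hv_bdd
  refine ⟨⟨_, ((hv_lim.sub hd_sum.hasSum.tendsto_sum_nat).add
    hb.hasSum.tendsto_sum_nat).congr fun n => ?_⟩, hd_sum⟩
  simp only [v]
  ring

theorem nonpos_of_tendsto_of_summable_mul {a x : ℕ → ℝ} {L : ℝ} (ha : ∀ n, 0 ≤ a n)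
    (ha_sum : ¬Summable a) (hax : Summable fun n => a n * x n) (hx : Tendsto x atTop (𝓝 L)) :
    L ≤ 0 := by
  by_contra! hL
  refine ha_sum (Summable.of_norm_bounded_eventually (hax.mul_left (2 / L)) ?_)
  rw [Nat.cofinite_eq_atTop]
  filter_upwards [hx.eventually (le_mem_nhds (half_lt_self hL))] with n hn
  rw [Real.norm_of_nonneg (ha n)]
  calc a n = 2 / L * (a n * (L / 2)) := by field_simp
    _ ≤ 2 / L * (a n * x n) := by gcongr; exact ha n

theorem robbins_siegmund_deterministic_general (ν α β : ℕ → ℝ)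
    (hν : ∀ k, 0 ≤ ν k)
    (hrec : ∀ k, ν (k + 1) ≤ (1 - α k) * ν k + β k)
    (hα : ∀ k, 0 ≤ α k ∧ α k ≤ 1)
    (hαdiv : Tendsto (fun n => ∑ k ∈ Finset.range n, α k) atTop atTop)
    (hβsum : Summable β) :
    Tendsto ν atTop (𝓝 0) := by
  obtain ⟨⟨L, hL⟩, hαν⟩ := exists_tendsto_and_summable_of_succ_le_sub_add hν
    (fun n => mul_nonneg (hα n).1 (hν n)) hβsum fun n => by linarith [hrec n]
  have hα_sum : ¬Summable α :=
    (not_summable_iff_tendsto_nat_atTop_of_nonneg fun n => (hα n).1).2 hαdiv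
  obtain rfl : L = 0 := le_antisymm (nonpos_of_tendsto_of_summable_mul (fun n => (hα n).1)
    hα_sum hαν hL) (ge_of_tendsto' hL hν)
  exact hL

/-- Deterministic Robbins–Siegmund-type lemma: if ν_{k+1} ≤ (1-α_k)ν_k + β_k with
α_k ∈ [0,1], β_k ≥ 0, ∑α_k = ∞, ∑β_k < ∞ and β_k/α_k → 0, then ν_k → 0. -/
theorem robbins_siegmund_deterministic (ν α β : ℕ → ℝ)
    (hν : ∀ k, 0 ≤ ν k)
    (hrec : ∀ k, ν (k + 1) ≤ (1 - α k) * ν k + β k)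
    (hα : ∀ k, 0 ≤ α k ∧ α k ≤ 1)
    (hβ : ∀ k, 0 ≤ β k)
    (hαdiv : Tendsto (fun n => ∑ k ∈ Finset.range n, α k) atTop atTop)
    (hβsum : Summable β)
    (hratio : Tendsto (fun k => β k / α k) atTop (𝓝 0)) :
    Tendsto ν atTop (𝓝 0) :=
  robbins_siegmund_deterministic_general ν α β hν hrec hα hαdiv hβsum
end

section
/- Let γ_k = γ_0/(k+1)^a and λ_k = λ_0/(k+1)^b with γ_0, λ_0 > 0, a, b > 0, a > b, a + b < 1 and 3a + b < 2. Then: (i) there exist B_1 > 0 and an integer k_1 such that (1/(γ_k³ λ_k))(λ_{k-1}/λ_k - 1)² ≤ B_1 for all k ≥ k_1; (ii) for any constants μ_h, L_ω > 0 there exist ρ ∈ (0,1) and an integer k_2 such that γ_{k-1}/λ_{k-1} ≤ (γ_k/λ_k)(1 + ρ (μ_h/(2L_ω)) γ_k λ_k) for all k ≥ k_2; (iii) lim_{k→∞} γ_k/λ_k = 0. -/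
/-!
Write `x = k + 1`. Everything rests on Bernoulli's inequality `((x + 1) / x) ^ p ≤ 1 + p / x`
for `0 ≤ p ≤ 1`. In (i) it bounds `λ_k / λ_{k+1} - 1` by `b / x`, and the prefactor
`(x + 1) ^ (3a + b) ≤ (x + 1) ^ 2` is then absorbed by `(b / x) ^ 2`. In (ii) the ratio
`γ_k / λ_k = (γ0 / λ0) x ^ (b - a)` shrinks from `k` to `k + 1` by the factor
`((x + 1) / x) ^ (a - b) ≤ 1 + (a - b) / x`, and `1 / x` is eventually dominated by any multiple
of `γ_{k+1} λ_{k+1} ∝ (x + 1) ^ (-(a + b))` since `a + b < 1`.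
-/

open Filter Topology Real

lemma rpow_add_one_div_self_le {x p : ℝ} (hx : 0 < x) (hp0 : 0 ≤ p) (hp1 : p ≤ 1) :
    ((x + 1) / x) ^ p ≤ 1 + p / x := by
  have h := rpow_one_add_le_one_add_mul_self (s := x⁻¹) (by linarith [inv_pos.2 hx]) hp0 hp1
  convert h using 2 <;> field_simp

lemma add_one_rpow_mul_sq_rpow_sub_one_le {x b e : ℝ} (hx : 1 ≤ x) (hb0 : 0 ≤ b) (hb1 : b ≤ 1)
    (he : e ≤ 2) : (x + 1) ^ e * (((x + 1) / x) ^ b - 1) ^ 2 ≤ 4 * b ^ 2 := by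
  have hx0 : 0 < x := by linarith
  have hgap0 : 0 ≤ ((x + 1) / x) ^ b - 1 :=
    sub_nonneg.2 (one_le_rpow ((one_le_div hx0).2 (by linarith)) hb0)
  have hgap : ((x + 1) / x) ^ b - 1 ≤ b / x := by
    linarith [rpow_add_one_div_self_le hx0 hb0 hb1]
  have hpow : (x + 1) ^ e ≤ (2 * x) ^ 2 := calc
    (x + 1) ^ e ≤ (x + 1) ^ (2 : ℝ) := rpow_le_rpow_of_exponent_le (by linarith) he
    _ = (x + 1) ^ 2 := rpow_two _
    _ ≤ (2 * x) ^ 2 := by gcongr; linarith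
  calc (x + 1) ^ e * (((x + 1) / x) ^ b - 1) ^ 2 ≤ (2 * x) ^ 2 * (b / x) ^ 2 := by gcongr
    _ = 4 * b ^ 2 := by field_simp; ring

lemma eventually_rpow_add_one_div_self_le {p q C : ℝ} (hp0 : 0 ≤ p) (hp1 : p ≤ 1) (hq : q < 1)
    (hC : 0 < C) : ∀ᶠ x in atTop, ((x + 1) / x) ^ p ≤ 1 + C / (x + 1) ^ q := by
  have hgrow : Tendsto (fun x : ℝ => (x + 1) ^ (1 - q)) atTop atTop :=
    (tendsto_rpow_atTop (by linarith)).comp (tendsto_atTop_add_const_right _ 1 tendsto_id)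
  filter_upwards [hgrow.eventually_ge_atTop (2 * p / C), eventually_ge_atTop 1] with x hxC hx1
  have hx0 : 0 < x := by linarith
  calc ((x + 1) / x) ^ p ≤ 1 + p / x := rpow_add_one_div_self_le hx0 hp0 hp1
    _ ≤ 1 + C / (x + 1) ^ q := by
      have hy0 : 0 < x + 1 := by linarith
      refine add_le_add_right ?_ 1
      calc p / x ≤ 2 * p / (x + 1) := by
            rw [div_le_div_iff₀ hx0 hy0]; nlinarith
        _ ≤ C * (x + 1) ^ (1 - q) / (x + 1) := by
            exact div_le_div_of_nonneg_right ((div_le_iff₀' hC).1 hxC) hy0.le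
        _ = C / (x + 1) ^ q := by
            field_simp
            rw [← rpow_add hy0]; simp

lemma div_rpow_div_div_rpow {x : ℝ} (hx : 0 < x) (c d p q : ℝ) :
    c / x ^ p / (d / x ^ q) = c / d / x ^ (p - q) := by
  rw [rpow_sub hx]; field_simp

lemma one_div_cube_mul_mul_sq_div_sub_one_le {γ0 lam0 a b x : ℝ} (hγ0 : 0 < γ0)
    (hlam0 : 0 < lam0) (hx : 1 ≤ x) (hb0 : 0 ≤ b) (hb1 : b ≤ 1) (h3ab : 3 * a + b ≤ 2) :
    1 / ((γ0 / (x + 1) ^ a) ^ 3 * (lam0 / (x + 1) ^ b)) *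
        (lam0 / x ^ b / (lam0 / (x + 1) ^ b) - 1) ^ 2 ≤ 4 * b ^ 2 / (γ0 ^ 3 * lam0) := by
  have hy : 0 < x + 1 := by linarith
  have hinv : 1 / ((γ0 / (x + 1) ^ a) ^ 3 * (lam0 / (x + 1) ^ b)) =
      (x + 1) ^ (3 * a + b) / (γ0 ^ 3 * lam0) := by
    rw [rpow_add hy, show (x + 1) ^ (3 * a) = ((x + 1) ^ a) ^ 3 by
      rw [← rpow_natCast, ← rpow_mul hy.le]; ring_nf]
    field_simp
  have hratio : lam0 / x ^ b / (lam0 / (x + 1) ^ b) = ((x + 1) / x) ^ b := by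
    rw [div_div_div_cancel_left' _ _ hlam0.ne', div_rpow hy.le (by linarith)]
  rw [hinv, hratio, div_mul_eq_mul_div]
  exact div_le_div_of_nonneg_right (add_one_rpow_mul_sq_rpow_sub_one_le hx hb0 hb1 h3ab)
    (by positivity)

lemma eventually_div_le_div_mul_one_add_mul {γ0 lam0 a b C : ℝ} (hγ0 : 0 < γ0)
    (hlam0 : 0 < lam0) (hba : b ≤ a) (hab1 : a - b ≤ 1) (hab : a + b < 1) (hC : 0 < C) :
    ∀ᶠ x in atTop, γ0 / x ^ a / (lam0 / x ^ b) ≤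
      γ0 / (x + 1) ^ a / (lam0 / (x + 1) ^ b) *
        (1 + C * (γ0 / (x + 1) ^ a) * (lam0 / (x + 1) ^ b)) := by
  filter_upwards [eventually_rpow_add_one_div_self_le (sub_nonneg.2 hba) hab1 hab
    (mul_pos (mul_pos hC hγ0) hlam0), eventually_gt_atTop 0] with x hstep hx
  have hy : 0 < x + 1 := by linarith
  have hprod : C * (γ0 / (x + 1) ^ a) * (lam0 / (x + 1) ^ b) =
      C * γ0 * lam0 / (x + 1) ^ (a + b) := by
    rw [rpow_add hy]; field_simp
  rw [div_rpow_div_div_rpow hx, div_rpow_div_div_rpow hy, hprod]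
  calc γ0 / lam0 / x ^ (a - b) = γ0 / lam0 / (x + 1) ^ (a - b) * ((x + 1) / x) ^ (a - b) := by
        rw [div_rpow hy.le hx.le]; field_simp
    _ ≤ _ := by gcongr

theorem stepsize_sequences_assumption4_general (γ0 lam0 a b : ℝ) (γ lam : ℕ → ℝ)
    (hγ0 : 0 < γ0) (hlam0 : 0 < lam0)
    (hγ : ∀ k : ℕ, γ k = γ0 / ((k : ℝ) + 1) ^ a)
    (hlam : ∀ k : ℕ, lam k = lam0 / ((k : ℝ) + 1) ^ b)
    (hb : 0 < b) (hba : b < a)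
    (hab : a + b < 1) (h3ab : 3 * a + b < 2) :
    (∃ B1 : ℝ, 0 < B1 ∧ ∃ k1 : ℕ, ∀ k ≥ k1,
      1 / (γ (k + 1) ^ 3 * lam (k + 1)) * (lam k / lam (k + 1) - 1) ^ 2 ≤ B1) ∧
    (∀ μh Lω : ℝ, 0 < μh → 0 < Lω →
      ∃ ρ : ℝ, 0 < ρ ∧ ρ < 1 ∧ ∃ k2 : ℕ, ∀ k ≥ k2,
        γ k / lam k ≤
          γ (k + 1) / lam (k + 1) *
            (1 + ρ * (μh / (2 * Lω)) * γ (k + 1) * lam (k + 1))) ∧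
    Tendsto (fun k => γ k / lam k) atTop (𝓝 0) := by
  have hu : Tendsto (fun k : ℕ => (k : ℝ) + 1) atTop atTop :=
    tendsto_atTop_add_const_right _ 1 tendsto_natCast_atTop_atTop
  have hu1 (k : ℕ) : (1 : ℝ) ≤ (k : ℝ) + 1 := le_add_of_nonneg_left k.cast_nonneg
  refine ⟨⟨4 * b ^ 2 / (γ0 ^ 3 * lam0), by positivity, 0, fun k _ => ?_⟩,
    fun μh Lω hμh hLω => ⟨1 / 2, by norm_num, by norm_num, ?_⟩, ?_⟩
  · simp only [hγ, hlam]
    push_cast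
    exact one_div_cube_mul_mul_sq_div_sub_one_le hγ0 hlam0 (hu1 k) hb.le (by linarith)
      (by linarith)
  · have hC : 0 < 1 / 2 * (μh / (2 * Lω)) := by positivity
    obtain ⟨k2, hk2⟩ := (hu.eventually (eventually_div_le_div_mul_one_add_mul hγ0 hlam0 hba.le
      (by linarith) hab hC)).exists_forall_of_atTop
    refine ⟨k2, fun k hk => ?_⟩
    simp only [hγ, hlam]
    push_cast
    exact hk2 k hk
  · simp only [hγ, hlam, div_rpow_div_div_rpow (zero_lt_one.trans_le (hu1 _))]
    exact tendsto_const_nhds.div_atTop ((tendsto_rpow_atTop (sub_pos.2 hba)).comp hu)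

/-- With γ_k = γ0/(k+1)^a and λ_k = lam0/(k+1)^b, a,b>0, a>b, a+b<1, 3a+b<2, the
sequences satisfy Assumption 4 of the paper. -/
theorem stepsize_sequences_assumption4 (γ0 lam0 a b : ℝ) (γ lam : ℕ → ℝ)
    (hγ0 : 0 < γ0) (hlam0 : 0 < lam0)
    (hγ : ∀ k : ℕ, γ k = γ0 / ((k : ℝ) + 1) ^ a)
    (hlam : ∀ k : ℕ, lam k = lam0 / ((k : ℝ) + 1) ^ b)
    (ha : 0 < a) (hb : 0 < b) (hba : b < a)
    (hab : a + b < 1) (h3ab : 3 * a + b < 2) :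
    (∃ B1 : ℝ, 0 < B1 ∧ ∃ k1 : ℕ, ∀ k ≥ k1,
      1 / (γ (k + 1) ^ 3 * lam (k + 1)) * (lam k / lam (k + 1) - 1) ^ 2 ≤ B1) ∧
    (∀ μh Lω : ℝ, 0 < μh → 0 < Lω →
      ∃ ρ : ℝ, 0 < ρ ∧ ρ < 1 ∧ ∃ k2 : ℕ, ∀ k ≥ k2,
        γ k / lam k ≤
          γ (k + 1) / lam (k + 1) *
            (1 + ρ * (μh / (2 * Lω)) * γ (k + 1) * lam (k + 1))) ∧
    Tendsto (fun k => γ k / lam k) atTop (𝓝 0) :=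
  stepsize_sequences_assumption4_general γ0 lam0 a b γ lam hγ0 hlam0 hγ hlam hb hba hab h3ab
end
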